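/- Write π_i(T) = ∑_{j≥0} b_{ij}·T^j with b_{ij} ∈ ℤ_p. Then for every fixed j ∈ ℤ_{≥0}, the coefficients b_{ij} tend to 0 in the p-adic topology of ℤ_p as i → ∞. -/

import Mathlib

/-!
Comparing coefficients of `T^j` in `E(π_i(T)) = (1+T)^{p^i}`, and using `E(T) ≡ 1 + T mod T²`, gives
`b_{ij} = C(p^i, j) - ∑_{2 ≤ k ≤ j} e_k [T^j] π_i(T)^k`. Since `π_i(0) = 0`, the coefficient
`[T^j] π_i^k` with `k ≥ 2` is a polynomial without constant term in the `b_{im}` with `m < j`, so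
by induction on `j` it suffices that `C(p^i, j) → 0`, which holds because `p^{i - v_p(j)}` divides it.
-/

open PowerSeries

noncomputable section

open scoped Classical in
/-- The series ℓ(T) = ∑_{i≥0} T^{p^i}/p^i over ℚ. -/
def lseries (p : ℕ) : PowerSeries ℚ :=
  PowerSeries.mk fun n => if ∃ i : ℕ, n = p ^ i then (n : ℚ)⁻¹ else 0

/-- Substitution `f(g)` of a power series `g` with zero constant coefficient
into a power series `f`. -/
def psComp {R : Type*} [CommSemiring R] (g f : PowerSeries R) : PowerSeries R :=
  PowerSeries.mk fun n =>
    ∑ k ∈ Finset.range (n + 1), PowerSeries.coeff k f * PowerSeries.coeff n (g ^ k)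

/-- The Artin–Hasse exponential E(T) = exp(∑ T^{p^i}/p^i) over ℚ. -/
def artinHasse (p : ℕ) : PowerSeries ℚ := psComp (lseries p) (PowerSeries.exp ℚ)

variable (p : ℕ) [Fact p.Prime]

/-- The property that `Ep` is the Artin–Hasse exponential regarded as a power
series with coefficients in `ℤ_p` (its coefficients lie in `ℤ_(p) ⊆ ℤ_p`). -/
def IsArtinHasseZp (Ep : PowerSeries ℤ_[p]) : Prop :=
  PowerSeries.map (PadicInt.Coe.ringHom) Ep
    = PowerSeries.map (Rat.castHom ℚ_[p]) (artinHasse p)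

/-- The property that `πfam i` is the power series `π_i(T) ∈ T·ℤ_p[[T]]`
with `E(π_i(T)) = (1+T)^{p^i}`. -/
def IsPiFamily (Ep : PowerSeries ℤ_[p]) (πfam : ℕ → PowerSeries ℤ_[p]) : Prop :=
  ∀ i : ℕ, PowerSeries.constantCoeff (πfam i) = 0
    ∧ psComp (πfam i) Ep = (1 + X) ^ p ^ i

theorem PowerSeries.coeff_one_add_X_pow (R : Type*) [CommSemiring R] (n k : ℕ) :
    coeff k ((1 + X : R⟦X⟧) ^ n) = n.choose k := by
  rw [show (1 + X : R⟦X⟧) = ((1 + Polynomial.X : Polynomial R) : R⟦X⟧) by simp, ← Polynomial.coe_pow,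
    Polynomial.coeff_coe, Polynomial.coeff_one_add_X_pow]

theorem coeff_psComp_of_ne_zero {R : Type*} [CommSemiring R] (g E : R⟦X⟧) {j : ℕ} (hj : j ≠ 0) :
    coeff j (psComp g E) =
      coeff 1 E * coeff j g + ∑ k ∈ Finset.Ico 2 (j + 1), coeff k E * coeff j (g ^ k) := by
  rw [psComp, coeff_mk, Finset.range_eq_Ico, Finset.sum_eq_sum_Ico_succ_bot (by omega),
    Finset.sum_eq_sum_Ico_succ_bot (by omega), pow_zero, coeff_one, if_neg hj, mul_zero,
    zero_add, pow_one]

theorem coeff_artinHasse_one (p : ℕ) : coeff 1 (artinHasse p) = 1 := by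
  rw [artinHasse, coeff_psComp_of_ne_zero _ _ one_ne_zero, Finset.Ico_eq_empty (by omega)]
  simp [lseries, coeff_exp, show ∃ i, 1 = p ^ i from ⟨0, (pow_zero p).symm⟩]

theorem IsArtinHasseZp.coeff_one {Ep : ℤ_[p]⟦X⟧} (hEp : IsArtinHasseZp p Ep) : coeff 1 Ep = 1 := by
  have h := congrArg (coeff 1) hEp
  simp only [coeff_map, coeff_artinHasse_one p, map_one] at h
  exact PadicInt.ext h

namespace PadicInt

variable {p}

theorem tendsto_zero_of_pow_dvd {x : ℕ → ℤ_[p]} {e : ℕ → ℕ} (he : Filter.Tendsto e .atTop .atTop)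
    (hdvd : ∀ i, (p : ℤ_[p]) ^ e i ∣ x i) : Filter.Tendsto x .atTop (nhds 0) := by
  rw [tendsto_zero_iff_norm_tendsto_zero]
  refine squeeze_zero (fun i => norm_nonneg _) (fun i => ?_)
    ((tendsto_pow_atTop_nhds_zero_of_lt_one (norm_nonneg _)
      ((norm_lt_one_iff_dvd (p : ℤ_[p])).2 dvd_rfl)).comp he)
  obtain ⟨c, hc⟩ := hdvd i
  rw [Function.comp_apply, hc, norm_mul, norm_pow]
  exact mul_le_of_le_one_right (by positivity) (norm_le_one c)

theorem tendsto_mul_of_tendsto_zero {f : ℕ → ℤ_[p]} (hf : Filter.Tendsto f .atTop (nhds 0))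
    (g : ℕ → ℤ_[p]) : Filter.Tendsto (fun i => f i * g i) .atTop (nhds 0) :=
  hf.zero_mul_isBoundedUnder_le (Filter.isBoundedUnder_of ⟨1, fun i => norm_le_one (g i)⟩)

variable (p) in
/-- By Kummer, `v_p (C(p^i, j)) = i - v_p(j)` for `0 < j ≤ p^i`. -/
theorem tendsto_choose_prime_pow {j : ℕ} (hj : j ≠ 0) :
    Filter.Tendsto (fun i => ((p ^ i).choose j : ℤ_[p])) .atTop (nhds 0) := by
  refine tendsto_zero_of_pow_dvd (Filter.tendsto_sub_atTop_nat (j.factorization p)) fun i => ?_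
  rw [← Nat.cast_pow]
  refine Nat.cast_dvd_cast ?_
  rcases le_or_gt j (p ^ i) with hle | hlt
  · have := Nat.factorization_choose_prime_pow_add_factorization (Fact.out : p.Prime) hle hj
    exact (Nat.pow_dvd_pow p (by omega)).trans (Nat.ordProj_dvd _ _)
  · simp [Nat.choose_eq_zero_of_lt hlt]

end PadicInt

section CoeffwiseLimits

variable {p}

open Filter

theorem tendsto_coeff_mul_of_tendsto_coeff_lt {f g : ℕ → ℤ_[p]⟦X⟧} {j : ℕ}
    (hf : ∀ m < j, Tendsto (fun i => coeff m (f i)) atTop (nhds 0))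
    (hg : ∀ i, constantCoeff (g i) = 0) :
    Tendsto (fun i => coeff j (f i * g i)) atTop (nhds 0) := by
  simp only [coeff_mul]
  rw [← Finset.sum_const_zero (s := Finset.HasAntidiagonal.antidiagonal j)]
  refine tendsto_finsetSum _ fun ab hab => ?_
  rcases Nat.eq_zero_or_pos ab.2 with hb | hb
  · simp [hb, hg]
  · exact PadicInt.tendsto_mul_of_tendsto_zero
      (hf ab.1 (by rw [Finset.HasAntidiagonal.mem_antidiagonal] at hab; omega)) _

theorem tendsto_coeff_zero_of_tendsto_coeff_psComp {E : ℤ_[p]⟦X⟧} (hE : IsUnit (coeff 1 E))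
    {f : ℕ → ℤ_[p]⟦X⟧} (hf : ∀ i, constantCoeff (f i) = 0)
    (hcomp : ∀ j ≠ 0, Tendsto (fun i => coeff j (psComp (f i) E)) atTop (nhds 0)) (j : ℕ) :
    Tendsto (fun i => coeff j (f i)) atTop (nhds 0) := by
  induction j using Nat.strong_induction_on with
  | _ j ih =>
  obtain rfl | hj := eq_or_ne j 0
  · simp [hf]
  have hpow : ∀ k ∈ Finset.Ico 2 (j + 1),
      Tendsto (fun i => coeff k E * coeff j (f i ^ k)) atTop (nhds 0) := by
    intro k hk
    obtain ⟨l, rfl⟩ : ∃ l, k = l + 2 := ⟨k - 2, by grind⟩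
    simpa only [← pow_succ', mul_zero] using (tendsto_coeff_mul_of_tendsto_coeff_lt ih
      (g := fun i => f i ^ (l + 1)) (by simp [hf])).const_mul (coeff (l + 2) E)
  have hrest := tendsto_finsetSum _ hpow
  simp only [Finset.sum_const_zero] at hrest
  have hlin : Tendsto (fun i => coeff 1 E * coeff j (f i)) atTop (nhds 0) := by
    simpa [coeff_psComp_of_ne_zero _ _ hj] using (hcomp j hj).sub hrest
  obtain ⟨u, hu⟩ := hE
  simpa [← hu, ← mul_assoc] using hlin.const_mul ↑u⁻¹

end CoeffwiseLimits

/-- writing `π_i(T) = ∑_j b_{ij} T^j` with `b_{ij} ∈ ℤ_p`, for every fixed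
`j` the coefficients `b_{ij}` tend to `0` in the `p`-adic topology as `i → ∞`. -/
theorem statement7
    (Ep : PowerSeries ℤ_[p]) (hEp : IsArtinHasseZp p Ep)
    (πfam : ℕ → PowerSeries ℤ_[p]) (hπ : IsPiFamily p Ep πfam) (j : ℕ) :
    Filter.Tendsto (fun i : ℕ => PowerSeries.coeff j (πfam i))
      Filter.atTop (nhds 0) := by
  refine tendsto_coeff_zero_of_tendsto_coeff_psComp (hEp.coeff_one ▸ isUnit_one) (fun i => (hπ i).1)
    (fun k hk => ?_) j
  simpa only [(hπ _).2, coeff_one_add_X_pow] using PadicInt.tendsto_choose_prime_pow p hk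

end
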